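/- arXiv:1005.0725 — 2 statements merged into one kernel-verified Lean document; each statement's English description precedes it below -/
import Mathlib

section
/- There is exactly one (2,5)-admissible datum, namely g' = 0, N = 2, d_1 = 6, a_1 = 5. (This is the paper's count 'only one for n = 5', corresponding to the twisted sector τ_{11111}, the hyperelliptic locus with five Weierstrass points marked.) -/
/-- A `(g,n)`-admissible datum (Definition 2.2 of the paper): a tuple
`(g', N, d₁, …, d_{N−1}, a₁, …, a_{N−1})` of natural numbers with `N ≥ 2`,
where `d` and `a` are encoded as functions `ℕ → ℕ` vanishing outside `{1, …, N−1}`,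
satisfying the Riemann–Hurwitz formula, the congruence `Σ i·dᵢ ≡ 0 (mod N)`,
`Σ aᵢ = n`, `aᵢ ≤ dᵢ`, and `aᵢ = 0` whenever `gcd(i, N) ≠ 1`. -/
structure AdmissibleDatum (g n : ℕ) where
  g' : ℕ
  N : ℕ
  hN : 2 ≤ N
  d : ℕ → ℕ
  a : ℕ → ℕ
  hd : ∀ i : ℕ, i ∉ Finset.Ico 1 N → d i = 0
  ha : ∀ i : ℕ, i ∉ Finset.Ico 1 N → a i = 0
  hRH : (2 * (g : ℤ) - 2) = (N : ℤ) * (2 * (g' : ℤ) - 2) +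
      ∑ i ∈ Finset.Ico 1 N,
        (d i : ℤ) * (Nat.gcd i N : ℤ) * (((N / Nat.gcd i N : ℕ) : ℤ) - 1)
  hmod : ((∑ i ∈ Finset.Ico 1 N, i * d i : ℕ) : ZMod N) = 0
  hsum : ∑ i ∈ Finset.Ico 1 N, a i = n
  hle : ∀ i : ℕ, a i ≤ d i
  hcop : ∀ i : ℕ, Nat.gcd i N ≠ 1 → a i = 0

/-!
Only the points with stabiliser of order exactly `N` can be marked, and each of them
contributes `N - 1` to the Riemann–Hurwitz sum, so `n (N - 1) + N (2g' - 2) ≤ 2g - 2`.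
For `(g, n) = (2, 5)` this forces `g' = 0` and `N = 2`; Riemann–Hurwitz then gives `d₁ = 6`,
and `a₁ = 5`. Conversely the hyperelliptic datum realises these values.
-/

namespace AdmissibleDatum

variable {g n : ℕ}

theorem ext_of_eqOn_Ico {A B : AdmissibleDatum g n} (hg' : A.g' = B.g') (hN : A.N = B.N)
    (hd : ∀ i ∈ Finset.Ico 1 A.N, A.d i = B.d i) (ha : ∀ i ∈ Finset.Ico 1 A.N, A.a i = B.a i) :
    A = B := by
  have hd' : A.d = B.d := funext fun i => by
    by_cases hi : i ∈ Finset.Ico 1 A.N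
    · exact hd i hi
    · rw [A.hd i hi, B.hd i (hN ▸ hi)]
  have ha' : A.a = B.a := funext fun i => by
    by_cases hi : i ∈ Finset.Ico 1 A.N
    · exact ha i hi
    · rw [A.ha i hi, B.ha i (hN ▸ hi)]
  cases A; cases B
  cases hg'; cases hN; cases hd'; cases ha'
  rfl

theorem a_mul_le_ramification (A : AdmissibleDatum g n) (i : ℕ) :
    (A.a i : ℤ) * ((A.N : ℤ) - 1) ≤
      (A.d i : ℤ) * (Nat.gcd i A.N : ℤ) * (((A.N / Nat.gcd i A.N : ℕ) : ℤ) - 1) := by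
  have hNpos : 0 < A.N := by have := A.hN; omega
  by_cases hcop : Nat.gcd i A.N = 1
  · rw [hcop, Nat.div_one, Nat.cast_one, mul_one]
    exact mul_le_mul_of_nonneg_right (by exact_mod_cast A.hle i)
      (by have := A.hN; omega)
  · rw [A.hcop i hcop, Nat.cast_zero, zero_mul]
    have hquot : 1 ≤ A.N / Nat.gcd i A.N :=
      Nat.div_pos (Nat.gcd_le_right _ hNpos) (Nat.gcd_pos_of_pos_right _ hNpos)
    have : (1 : ℤ) ≤ ((A.N / Nat.gcd i A.N : ℕ) : ℤ) := by exact_mod_cast hquot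
    exact mul_nonneg (by positivity) (by linarith)

theorem marked_mul_add_le (A : AdmissibleDatum g n) :
    (n : ℤ) * ((A.N : ℤ) - 1) + (A.N : ℤ) * (2 * (A.g' : ℤ) - 2) ≤ 2 * (g : ℤ) - 2 := by
  have hsum : (n : ℤ) * ((A.N : ℤ) - 1) = ∑ i ∈ Finset.Ico 1 A.N, (A.a i : ℤ) * ((A.N : ℤ) - 1) := by
    rw [← Finset.sum_mul, ← Nat.cast_sum, A.hsum]
  have := Finset.sum_le_sum fun i (_ : i ∈ Finset.Ico 1 A.N) => A.a_mul_le_ramification i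
  linarith [A.hRH]

theorem d_one_of_N_eq_two (A : AdmissibleDatum g n) (hN : A.N = 2) :
    (A.d 1 : ℤ) = 2 * (g : ℤ) + 2 - 4 * (A.g' : ℤ) := by
  have hRH := A.hRH
  simp only [hN, Nat.Ico_succ_singleton, Finset.sum_singleton, Nat.gcd_one_left,
    Nat.div_one] at hRH
  push_cast at hRH
  linarith

theorem a_one_of_N_eq_two (A : AdmissibleDatum g n) (hN : A.N = 2) : A.a 1 = n := by
  simpa only [hN, Nat.Ico_succ_singleton, Finset.sum_singleton] using A.hsum

/-- The hyperelliptic datum: the double cover of `ℙ¹` branched at the `2g + 2`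
Weierstrass points, `n` of which are marked. -/
def hyperelliptic (g n : ℕ) (hn : n ≤ 2 * g + 2) : AdmissibleDatum g n where
  g' := 0
  N := 2
  hN := le_rfl
  d i := if i = 1 then 2 * g + 2 else 0
  a i := if i = 1 then n else 0
  hd i hi := if_neg fun h => hi (by simp [h])
  ha i hi := if_neg fun h => hi (by simp [h])
  hRH := by simp; ring
  hmod := by
    simp only [Nat.Ico_succ_singleton, Finset.sum_singleton, if_pos, one_mul]
    rw [show 2 * g + 2 = 2 * (g + 1) by ring, Nat.cast_mul, ZMod.natCast_self, zero_mul]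
  hsum := by simp
  hle i := by split_ifs <;> omega
  hcop i hi := if_neg fun h => hi (by simp [h])

theorem g'_eq_zero_and_N_eq_two_of_two_five (A : AdmissibleDatum 2 5) :
    A.g' = 0 ∧ A.N = 2 := by
  have hle := A.marked_mul_add_le
  have hN : (2 : ℤ) ≤ A.N := by exact_mod_cast A.hN
  have hg' : A.g' = 0 := by
    by_contra h
    have : (1 : ℤ) ≤ A.g' := by exact_mod_cast Nat.one_le_iff_ne_zero.mpr h
    push_cast at hle
    nlinarith
  refine ⟨hg', ?_⟩
  rw [hg'] at hle
  push_cast at hle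
  omega

end AdmissibleDatum

/-- There is exactly one `(2,5)`-admissible datum, namely `g' = 0`, `N = 2`, `d 1 = 6`,
`a 1 = 5`. -/
theorem admissibleDatum_two_five_unique :
    Nat.card (AdmissibleDatum 2 5) = 1 ∧
    ∀ A : AdmissibleDatum 2 5, A.g' = 0 ∧ A.N = 2 ∧ A.d 1 = 6 ∧ A.a 1 = 5 := by
  have hshape (A : AdmissibleDatum 2 5) : A.g' = 0 ∧ A.N = 2 ∧ A.d 1 = 6 ∧ A.a 1 = 5 := by
    obtain ⟨hg', hN⟩ := AdmissibleDatum.g'_eq_zero_and_N_eq_two_of_two_five A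
    have hd := A.d_one_of_N_eq_two hN
    rw [hg'] at hd
    exact ⟨hg', hN, by omega, A.a_one_of_N_eq_two hN⟩
  refine ⟨Nat.card_eq_one_iff_unique.mpr ⟨⟨fun A B => ?_⟩, ⟨AdmissibleDatum.hyperelliptic 2 5 (by norm_num)⟩⟩,
    hshape⟩
  obtain ⟨hAg', hAN, hAd, hAa⟩ := hshape A
  obtain ⟨hBg', hBN, hBd, hBa⟩ := hshape B
  refine AdmissibleDatum.ext_of_eqOn_Ico (hAg'.trans hBg'.symm) (hAN.trans hBN.symm) ?_ ?_ <;>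
  · intro i hi
    rw [hAN, Nat.Ico_succ_singleton, Finset.mem_singleton] at hi
    subst hi
    simp only [hAd, hBd, hAa, hBa]
end

section
/- For every natural number n and every (2,n)-admissible datum, the order N of the cyclic group belongs to {2, 3, 4, 5, 6, 8, 10}. (This is the list of orders of cyclic automorphism groups occurring in the paper's classification table of the twisted sectors of M_2; in particular no (2,n)-admissible datum has N = 7, N = 9, or N ≥ 11.) -/
/-!
Riemann–Hurwitz for a cyclic cover of degree `N` of a curve of genus `g'` by a curve of
genus 2 reads `2 = N (2g' - 2) + ∑ (N - gcd(x, N))`, the sum running over the branch points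
with monodromy `x`; every term lies between `N / 2` and `N - 1`. This rules out `g' ≥ 2` and
forces `N ≤ 4` when `g' = 1`. When `g' = 0` and `N ≥ 7` there are three or four branch points,
and their monodromies sum to `0` modulo `N`. With four, exactly one of them has `2x ≢ 0`, which
is impossible. With three, the gcds sum to `N - 2` and a common divisor of two of them divides
the third, hence divides 2; this leaves `N ∈ {8, 10}` and the gcds `(6, 2, 2)` for `N = 12`,
which fail modulo 4.
-/

open Finset

theorem Nat.two_mul_le_of_dvd_of_lt {d N : ℕ} (hd : d ∣ N) (hlt : d < N) : 2 * d ≤ N := by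
  obtain ⟨m, rfl⟩ := hd
  rcases (by omega : m = 0 ∨ m = 1 ∨ 2 ≤ m) with rfl | rfl | hm <;> nlinarith

theorem Nat.three_mul_le_of_dvd_of_lt {d N : ℕ} (hd : d ∣ N) (hlt : d < N) (h2 : 2 * d ≠ N) :
    3 * d ≤ N := by
  obtain ⟨m, rfl⟩ := hd
  rcases (by omega : m = 0 ∨ m = 1 ∨ m = 2 ∨ 3 ≤ m) with rfl | rfl | rfl | hm
  · omega
  · omega
  · omega
  · nlinarith

theorem Nat.dvd_two_mul_of_dvd_mul_of_gcd_dvd_two {a b m : ℕ} (hb : b ∣ a * m)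
    (hab : Nat.gcd a b ∣ 2) : b ∣ 2 * m :=
  (Nat.dvd_gcd hb (dvd_mul_right b m)).trans
    (Nat.gcd_mul_right a m b ▸ mul_dvd_mul_right hab m)

theorem Nat.gcd_lt_of_mem_Ico {N x : ℕ} (hx : x ∈ Ico 1 N) : Nat.gcd x N < N := by
  rw [mem_Ico] at hx
  exact (Nat.gcd_le_left N hx.1).trans_lt hx.2

theorem Nat.two_mul_gcd_le_of_mem_Ico {N x : ℕ} (hx : x ∈ Ico 1 N) : 2 * Nat.gcd x N ≤ N :=
  Nat.two_mul_le_of_dvd_of_lt (Nat.gcd_dvd_right x N) (Nat.gcd_lt_of_mem_Ico hx)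

theorem Nat.gcd_pos_of_mem_Ico {N x : ℕ} (hx : x ∈ Ico 1 N) : 0 < Nat.gcd x N :=
  Nat.gcd_pos_of_pos_left N (mem_Ico.1 hx).1

theorem two_mul_gcd_eq_of_dvd_two_mul {N x : ℕ} (hx : x ∈ Ico 1 N) (h : N ∣ 2 * x) :
    2 * Nat.gcd x N = N := by
  have h2g : N ∣ 2 * Nat.gcd x N := by
    rw [← Nat.gcd_mul_left]
    exact Nat.dvd_gcd h (dvd_mul_left N 2)
  have := Nat.le_of_dvd (by linarith [Nat.gcd_pos_of_mem_Ico hx]) h2g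
  have := Nat.two_mul_gcd_le_of_mem_Ico hx
  omega

theorem three_le_sub_two_mul_gcd {N x : ℕ} (hx : x ∈ Ico 1 N) (h : ¬ N ∣ 2 * x) (h7 : 7 ≤ N) :
    3 ≤ N - 2 * Nat.gcd x N := by
  have hne : 2 * Nat.gcd x N ≠ N := fun h2 =>
    h (h2 ▸ mul_dvd_mul_left 2 (Nat.gcd_dvd_left x N))
  have := Nat.three_mul_le_of_dvd_of_lt (Nat.gcd_dvd_right x N) (Nat.gcd_lt_of_mem_Ico hx) hne
  omega

theorem Multiset.card_filter_not_dvd_ne_one {q : ℕ} {s : Multiset ℕ} (h : q ∣ s.sum) :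
    (s.filter fun x => ¬ q ∣ x).card ≠ 1 := by
  intro hcard
  obtain ⟨y, hy⟩ := Multiset.card_eq_one.1 hcard
  have hy_mem : y ∈ s.filter fun x => ¬ q ∣ x := hy ▸ Multiset.mem_singleton_self y
  have hdvd : q ∣ (s.filter fun x => q ∣ x).sum :=
    Multiset.dvd_sum fun x hx => (Multiset.mem_filter.1 hx).2
  rw [← Multiset.filter_add_not (fun x => q ∣ x) s, hy, Multiset.sum_add,
    Multiset.sum_singleton] at h
  exact (Multiset.mem_filter.1 hy_mem).2 ((Nat.dvd_add_right hdvd).1 h)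

theorem Multiset.sum_map_sum_replicate {ι M : Type*} [AddCommMonoid M] (S : Finset ι)
    (d : ι → ℕ) (f : ι → M) :
    ((∑ i ∈ S, Multiset.replicate (d i) i).map f).sum = ∑ i ∈ S, d i • f i := by
  rw [← Multiset.coe_mapAddMonoidHom, map_sum, ← Multiset.coe_sumAddMonoidHom, map_sum]
  simp

theorem Nat.gcd_gcd_dvd_gcd_of_dvd_add {N x y z : ℕ} (h : N ∣ x + y + z) :
    Nat.gcd (Nat.gcd x N) (Nat.gcd y N) ∣ Nat.gcd z N := by
  set q := Nat.gcd (Nat.gcd x N) (Nat.gcd y N)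
  have hqx : q ∣ x := (Nat.gcd_dvd_left _ _).trans (Nat.gcd_dvd_left x N)
  have hqy : q ∣ y := (Nat.gcd_dvd_right _ _).trans (Nat.gcd_dvd_left y N)
  have hqN : q ∣ N := (Nat.gcd_dvd_left _ _).trans (Nat.gcd_dvd_right x N)
  exact Nat.dvd_gcd ((Nat.dvd_add_right (dvd_add hqx hqy)).1 (hqN.trans h)) hqN

theorem gcd_gcd_dvd_two {N x y z : ℕ} (hdvd : N ∣ x + y + z)
    (hsum : Nat.gcd x N + Nat.gcd y N + Nat.gcd z N + 2 = N) :
    Nat.gcd (Nat.gcd x N) (Nat.gcd y N) ∣ 2 := by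
  have hqz := Nat.gcd_gcd_dvd_gcd_of_dvd_add hdvd
  have hqN : Nat.gcd (Nat.gcd x N) (Nat.gcd y N) ∣ N :=
    (Nat.gcd_dvd_left _ _).trans (Nat.gcd_dvd_right x N)
  refine (Nat.dvd_add_right (dvd_add (dvd_add (Nat.gcd_dvd_left _ _)
    (Nat.gcd_dvd_right _ _)) hqz)).1 ?_
  rwa [hsum]

theorem not_dvd_add_of_gcd_mod_four_eq_two {N x y z : ℕ} (h4 : 4 ∣ N)
    (hx : Nat.gcd x N % 4 = 2) (hy : Nat.gcd y N % 4 = 2) (hz : Nat.gcd z N % 4 = 2) :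
    ¬ N ∣ x + y + z := by
  have hmod : ∀ v, Nat.gcd v N % 4 = 2 → v % 4 = 2 := by
    intro v hv
    have h2 : 2 ∣ v :=
      (Nat.dvd_of_mod_eq_zero (by omega : Nat.gcd v N % 2 = 0)).trans (Nat.gcd_dvd_left v N)
    have h4v : ¬ 4 ∣ v := fun h => by
      have := Nat.mod_eq_zero_of_dvd (Nat.dvd_gcd h h4)
      omega
    omega
  intro hdvd
  have := h4.trans hdvd
  have := hmod x hx
  have := hmod y hy
  have := hmod z hz
  omega

/-- Writing `N = a * m`, the gcd conditions force `b, c ∣ 2 * m`, and `hmax` leaves `m ∈ {2, 3}`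
unless `N = 8`; what remains is a finite check. -/
theorem eq_eight_or_ten_or_twelve_of_dvd {N a b c : ℕ} (ha : a ∣ N) (hb : b ∣ N)
    (hc : c ∣ N) (hab : Nat.gcd a b ∣ 2) (hac : Nat.gcd a c ∣ 2) (hbc : Nat.gcd b c ∣ 2)
    (hsum : a + b + c + 2 = N) (hmax : N ≤ 3 * a + 2) (h7 : 7 ≤ N) :
    N = 8 ∨ N = 10 ∨ (N = 12 ∧ b = 2 ∧ c = 2) := by
  obtain ⟨m, rfl⟩ := ha
  have hbm : b ∣ 2 * m := Nat.dvd_two_mul_of_dvd_mul_of_gcd_dvd_two hb hab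
  have hcm : c ∣ 2 * m := Nat.dvd_two_mul_of_dvd_mul_of_gcd_dvd_two hc hac
  rcases (by omega : m ≤ 3 ∨ 4 ≤ m) with hm | hm
  · interval_cases m
    · omega
    · omega
    · obtain rfl : a = b + c + 2 := by omega
      have hb4 : b ≤ 4 := Nat.le_of_dvd (by norm_num) hbm
      have hc4 : c ≤ 4 := Nat.le_of_dvd (by norm_num) hcm
      interval_cases b <;> interval_cases c <;> norm_num at *
    · obtain rfl : a = (b + c + 2) / 2 := by omega
      have hb6 : b ≤ 6 := Nat.le_of_dvd (by norm_num) hbm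
      have hc6 : c ≤ 6 := Nat.le_of_dvd (by norm_num) hcm
      interval_cases b <;> interval_cases c <;> norm_num at *
  · have : a ≤ 2 := by nlinarith
    interval_cases a <;> omega

theorem eq_eight_or_ten_of_three_points {N x y z : ℕ} (hx : x ∈ Ico 1 N) (hy : y ∈ Ico 1 N)
    (hz : z ∈ Ico 1 N) (hdvd : N ∣ x + y + z)
    (hsum : Nat.gcd x N + Nat.gcd y N + Nat.gcd z N + 2 = N) (h7 : 7 ≤ N) :
    N = 8 ∨ N = 10 := by
  wlog hmax : N ≤ 3 * Nat.gcd x N + 2 generalizing x y z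
  · rcases (by omega : N ≤ 3 * Nat.gcd y N + 2 ∨ N ≤ 3 * Nat.gcd z N + 2) with h | h
    · exact this hy hx hz (by rwa [add_comm y x]) (by omega) h
    · exact this hz hx hy (by rwa [add_comm z x, add_right_comm]) (by omega) h
  have hxy := gcd_gcd_dvd_two hdvd hsum
  have hxz := gcd_gcd_dvd_two (by rwa [add_right_comm] at hdvd)
    (by omega : _ + _ + Nat.gcd y N + 2 = N)
  have hyz := gcd_gcd_dvd_two (by rwa [add_rotate] at hdvd)
    (by omega : _ + _ + Nat.gcd x N + 2 = N)
  rcases eq_eight_or_ten_or_twelve_of_dvd (Nat.gcd_dvd_right x N) (Nat.gcd_dvd_right y N)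
      (Nat.gcd_dvd_right z N) hxy hxz hyz hsum hmax h7 with h | h | ⟨rfl, hy2, hz2⟩
  · exact .inl h
  · exact .inr h
  · exact absurd hdvd
      (not_dvd_add_of_gcd_mod_four_eq_two (by norm_num) (by omega) (by omega) (by omega))

/-- A branch point with monodromy `x` has `gcd x N` preimages, each of ramification index
`N / gcd x N`, so it contributes `N - gcd x N` to the Riemann–Hurwitz formula. -/
def totalRamification (N : ℕ) (s : Multiset ℕ) : ℕ :=
  (s.map fun x => N - Nat.gcd x N).sum

section TotalRamification

variable {N : ℕ} {s : Multiset ℕ}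

theorem card_mul_le_two_mul_totalRamification (hs : ∀ x ∈ s, x ∈ Ico 1 N) :
    Multiset.card s * N ≤ 2 * totalRamification N s := by
  rw [totalRamification, ← Multiset.sum_map_mul_left]
  have h := Multiset.card_nsmul_le_sum (s := s.map fun x => 2 * (N - Nat.gcd x N)) (a := N) <| by
    simp only [Multiset.mem_map]
    rintro _ ⟨x, hx, rfl⟩
    have := Nat.two_mul_gcd_le_of_mem_Ico (hs x hx)
    omega
  simpa using h

theorem totalRamification_le_card_mul (hs : ∀ x ∈ s, x ∈ Ico 1 N) :
    totalRamification N s ≤ Multiset.card s * (N - 1) := by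
  have h := Multiset.sum_le_card_nsmul (s.map fun x => N - Nat.gcd x N) (N - 1) <| by
    simp only [Multiset.mem_map]
    rintro _ ⟨x, hx, rfl⟩
    have := Nat.gcd_pos_of_mem_Ico (hs x hx)
    omega
  simpa [totalRamification] using h

theorem le_four_of_totalRamification_eq_two (hs : ∀ x ∈ s, x ∈ Ico 1 N)
    (hR : totalRamification N s = 2) : N ≤ 4 := by
  have hcard : Multiset.card s ≠ 0 := by
    intro h0
    simp [Multiset.card_eq_zero.1 h0, totalRamification] at hR
  have := card_mul_le_two_mul_totalRamification hs
  rw [hR] at this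
  nlinarith [Nat.one_le_iff_ne_zero.2 hcard]

/-- The defects `N - 2 * gcd x N` add up to 4; each is `0` when `N ∣ 2 * x` and at least `3`
otherwise, so exactly one point has `¬ N ∣ 2 * x`, which is impossible modulo `N`. -/
theorem card_ne_four_of_totalRamification_eq (hs : ∀ x ∈ s, x ∈ Ico 1 N) (hdvd : N ∣ s.sum)
    (hR : totalRamification N s = 2 * N + 2) (h7 : 7 ≤ N) : Multiset.card s ≠ 4 := by
  intro hcard
  let t : ℕ → ℕ := fun x => N - 2 * Nat.gcd x N
  have ht_sum : (s.map t).sum = 4 := by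
    have h2R : (s.map fun x => N + t x).sum = 2 * totalRamification N s := by
      rw [totalRamification, ← Multiset.sum_map_mul_left]
      refine congrArg Multiset.sum (Multiset.map_congr rfl fun x hx => ?_)
      have := Nat.two_mul_gcd_le_of_mem_Ico (hs x hx)
      show N + (N - 2 * Nat.gcd x N) = 2 * (N - Nat.gcd x N)
      omega
    rw [Multiset.sum_map_add, hR] at h2R
    simp [hcard] at h2R
    omega
  set E := s.filter fun x => ¬ N ∣ 2 * x
  have ht_three : ∀ x ∈ E, 3 ≤ t x := fun x hx =>
    let ⟨hxs, hNx⟩ := Multiset.mem_filter.1 hx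
    three_le_sub_two_mul_gcd (hs x hxs) hNx h7
  have hE_ne_one : Multiset.card E ≠ 1 := by
    have := Multiset.card_filter_not_dvd_ne_one (s := s.map (2 * ·)) (q := N)
      (by rw [Multiset.sum_map_mul_left, Multiset.map_id']; exact dvd_mul_of_dvd_right hdvd 2)
    rwa [Multiset.filter_map, Multiset.card_map] at this
  have hsum_E : (s.map t).sum = (E.map t).sum := by
    rw [← Multiset.filter_add_not (fun x => N ∣ 2 * x) s, Multiset.map_add, Multiset.sum_add,
      Multiset.sum_eq_zero, zero_add]
    simp only [Multiset.mem_map, Multiset.mem_filter]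
    rintro _ ⟨x, ⟨hx, hNx⟩, rfl⟩
    exact Nat.sub_eq_zero_of_le (two_mul_gcd_eq_of_dvd_two_mul (hs x hx) hNx).ge
  have hE_le : Multiset.card E * 3 ≤ (E.map t).sum := by
    simpa using Multiset.card_nsmul_le_sum (s := E.map t) (a := 3) (by simpa using ht_three)
  have hE_zero : E = 0 := Multiset.card_eq_zero.1 (by omega)
  simp [hE_zero] at hsum_E
  omega

theorem eq_eight_or_ten_of_totalRamification_eq (hs : ∀ x ∈ s, x ∈ Ico 1 N)
    (hdvd : N ∣ s.sum) (hR : totalRamification N s = 2 * N + 2) (h7 : 7 ≤ N) :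
    N = 8 ∨ N = 10 := by
  have hlow := card_mul_le_two_mul_totalRamification hs
  have hup := totalRamification_le_card_mul hs
  rw [hR] at hlow hup
  have h3 : 3 ≤ Multiset.card s := by
    by_contra h
    have := Nat.mul_le_mul_right (N - 1) (show Multiset.card s ≤ 2 by omega)
    omega
  have h4 : Multiset.card s ≤ 4 := by
    by_contra h
    have := Nat.mul_le_mul_right N (show 5 ≤ Multiset.card s by omega)
    omega
  rcases (by omega : Multiset.card s = 3 ∨ Multiset.card s = 4) with hcard | hcard
  · obtain ⟨x, y, z, rfl⟩ := Multiset.card_eq_three.1 hcard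
    simp only [Multiset.insert_eq_cons, Multiset.mem_cons, Multiset.mem_singleton,
      forall_eq_or_imp, forall_eq] at hs
    obtain ⟨hx, hy, hz⟩ := hs
    simp only [totalRamification, Multiset.insert_eq_cons, Multiset.map_cons,
      Multiset.map_singleton, Multiset.sum_cons, Multiset.sum_singleton] at hR
    simp only [Multiset.insert_eq_cons, Multiset.sum_cons, Multiset.sum_singleton,
      ← add_assoc] at hdvd
    have := Nat.gcd_lt_of_mem_Ico hx
    have := Nat.gcd_lt_of_mem_Ico hy
    have := Nat.gcd_lt_of_mem_Ico hz
    exact eq_eight_or_ten_of_three_points hx hy hz hdvd (by omega) h7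
  · exact absurd hcard (card_ne_four_of_totalRamification_eq hs hdvd hR h7)

end TotalRamification

namespace AdmissibleDatum

variable {g n : ℕ} (A : AdmissibleDatum g n)

/-- The branch points, recorded by their monodromy: `i` occurs `A.d i` times. -/
def monodromy : Multiset ℕ :=
  ∑ i ∈ Ico 1 A.N, Multiset.replicate (A.d i) i

theorem mem_Ico_of_mem_monodromy {x : ℕ} (hx : x ∈ A.monodromy) : x ∈ Ico 1 A.N := by
  obtain ⟨i, hi, hx⟩ := Multiset.mem_sum.1 hx
  rwa [Multiset.eq_of_mem_replicate hx]

theorem N_dvd_sum_monodromy : A.N ∣ A.monodromy.sum := by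
  have h := Multiset.sum_map_sum_replicate (Ico 1 A.N) A.d id
  rw [Multiset.map_id] at h
  rw [monodromy, h, ← ZMod.natCast_eq_zero_iff]
  simpa [mul_comm] using A.hmod

theorem riemannHurwitz :
    2 * g + 2 * A.N = 2 + 2 * A.N * A.g' + totalRamification A.N A.monodromy := by
  have hterm : ∀ i ∈ Ico 1 A.N,
      (A.d i : ℤ) * (Nat.gcd i A.N : ℤ) * (((A.N / Nat.gcd i A.N : ℕ) : ℤ) - 1) =
        ((A.d i * (A.N - Nat.gcd i A.N) : ℕ) : ℤ) := by
    intro i hi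
    have hmul : (Nat.gcd i A.N : ℤ) * ((A.N / Nat.gcd i A.N : ℕ) : ℤ) = A.N := by
      exact_mod_cast Nat.mul_div_cancel' (Nat.gcd_dvd_right i A.N)
    rw [Nat.cast_mul, Nat.cast_sub (Nat.gcd_lt_of_mem_Ico hi).le]
    linear_combination (A.d i : ℤ) * hmul
  have hRH := A.hRH
  rw [Finset.sum_congr rfl hterm, ← Nat.cast_sum] at hRH
  rw [totalRamification, monodromy, Multiset.sum_map_sum_replicate]
  generalize ∑ i ∈ Ico 1 A.N, A.d i • (A.N - Nat.gcd i A.N) = R at hRH ⊢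
  zify
  linear_combination hRH

end AdmissibleDatum

/-- For every natural number `n` and every `(2,n)`-admissible datum, the order `N` of the
cyclic group belongs to `{2, 3, 4, 5, 6, 8, 10}`. -/
theorem admissibleDatum_two_N_mem (n : ℕ) (A : AdmissibleDatum 2 n) :
    A.N ∈ ({2, 3, 4, 5, 6, 8, 10} : Finset ℕ) := by
  have hRH := A.riemannHurwitz
  have hN := A.hN
  have hs : ∀ x ∈ A.monodromy, x ∈ Ico 1 A.N := fun x hx => A.mem_Ico_of_mem_monodromy hx
  simp only [mem_insert, mem_singleton]
  rcases (by omega : A.g' = 0 ∨ A.g' = 1 ∨ 2 ≤ A.g') with hg' | hg' | hg'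
  · rcases le_or_gt A.N 6 with h6 | h7
    · omega
    · have := eq_eight_or_ten_of_totalRamification_eq hs A.N_dvd_sum_monodromy
        (by rw [hg'] at hRH; omega) h7
      omega
  · have := le_four_of_totalRamification_eq_two hs (by rw [hg'] at hRH; omega)
    omega
  · nlinarith
end
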